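/- Let T ∈ 𝕋, i.e., T is a tree with at least one non-pendant vertex in which every non-pendant vertex is adjacent to some pendant vertex. Then every alternating path in T with respect to any maximum matching has length at most three. -/

import Mathlib

open SimpleGraph

/-- `X` is the group inverse of `A`. -/
def IsGroupInverse {n : Type*} [Fintype n] (A X : Matrix n n ℝ) : Prop :=
  A * X * A = A ∧ X * A * X = X ∧ A * X = X * A

/-- A matching of a graph: a set of pairwise non-incident edges. -/
def IsMatching {V : Type*} (G : SimpleGraph V) (M : Finset (Sym2 V)) : Prop :=
  (↑M : Set (Sym2 V)) ⊆ G.edgeSet ∧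
    ∀ e ∈ M, ∀ f ∈ M, e ≠ f → ∀ v : V, ¬(v ∈ e ∧ v ∈ f)

/-- A maximum matching: a matching of maximum cardinality. -/
def IsMaxMatching {V : Type*} (G : SimpleGraph V) (M : Finset (Sym2 V)) : Prop :=
  IsMatching G M ∧ ∀ N : Finset (Sym2 V), IsMatching G N → N.card ≤ M.card

/-- A nonempty list of edges alternately in and out of `M`,
beginning and ending with edges of `M`. -/
def IsAltEdgeList {V : Type*} (M : Set (Sym2 V)) : List (Sym2 V) → Prop
  | [] => False
  | [e] => e ∈ M
  | e :: f :: rest => e ∈ M ∧ f ∉ M ∧ IsAltEdgeList M rest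

/-- A pair of vertices is maximally matchable if they are joined by a path that is
alternating with respect to some maximum matching. -/
def MaxMatchable {V : Type*} (G : SimpleGraph V) (u v : V) : Prop :=
  ∃ (p : G.Walk u v) (M : Finset (Sym2 V)),
    p.IsPath ∧ IsMaxMatching G M ∧ IsAltEdgeList (↑M) p.edges

/-- `G` is a star: some center `c` is adjacent to exactly the other vertices,
and there are no other edges. -/
def IsStar {V : Type*} (G : SimpleGraph V) : Prop :=
  ∃ c : V, ∀ u v : V, G.Adj u v ↔ ((u = c ∧ v ≠ c) ∨ (v = c ∧ u ≠ c))

/-- The class 𝕋: trees with at least one non-pendant vertex in which every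
non-pendant vertex is adjacent to a pendant vertex. -/
def InClassT {V : Type*} [Fintype V] (T : SimpleGraph V) [DecidableRel T.Adj] : Prop :=
  T.IsTree ∧ (∃ v, T.degree v ≠ 1) ∧
    ∀ v, T.degree v ≠ 1 → ∃ u, T.Adj v u ∧ T.degree u = 1

/-- The number of pendant neighbours of `v`. -/
def pendantNbrs {V : Type*} [Fintype V] [DecidableEq V] (T : SimpleGraph V)
    [DecidableRel T.Adj] (v : V) : ℕ :=
  ((T.neighborFinset v).filter fun u => T.degree u = 1).card
/-!
If the third edge `cd` of an alternating path of length at least four lies in the maximum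
matching `M`, both `c` and `d` are interior vertices of the path, hence not pendant. In a tree
of class 𝕋 they then have pendant neighbours `p` and `q`, necessarily distinct and unmatched,
and `p - c - d - q` is an augmenting path: trading `cd` for `pc` and `dq` enlarges `M`.
-/

section

variable {V : Type*} {G : SimpleGraph V} {M : Finset (Sym2 V)}

namespace IsMatching

lemma adj_of_mem (hM : IsMatching G M) {u v : V} (h : s(u, v) ∈ M) : G.Adj u v :=
  hM.1 (Finset.mem_coe.2 h)

lemma eq_of_mem_of_mem (hM : IsMatching G M) {e f : Sym2 V} (he : e ∈ M) (hf : f ∈ M) {v : V}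
    (hve : v ∈ e) (hvf : v ∈ f) : e = f := by
  by_contra hef
  exact hM.2 e he f hf hef v ⟨hve, hvf⟩

lemma mono (hM : IsMatching G M) {N : Finset (Sym2 V)} (hNM : N ⊆ M) : IsMatching G N :=
  ⟨(Finset.coe_subset.2 hNM).trans hM.1, fun e he f hf => hM.2 e (hNM he) f (hNM hf)⟩

lemma insert [DecidableEq V] (hM : IsMatching G M) {u v : V} (huv : G.Adj u v)
    (hu : ∀ e ∈ M, u ∉ e) (hv : ∀ e ∈ M, v ∉ e) : IsMatching G (insert s(u, v) M) := by
  have hdisj : ∀ e ∈ M, ∀ w ∈ s(u, v), w ∉ e := by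
    rintro e he w hw
    rcases Sym2.mem_iff.1 hw with rfl | rfl
    exacts [hu e he, hv e he]
  refine ⟨?_, ?_⟩
  · rw [Finset.coe_insert, Set.insert_subset_iff]
    exact ⟨huv, hM.1⟩
  · simp only [Finset.mem_insert]
    rintro e (rfl | he) f (rfl | hf) hef w ⟨hwe, hwf⟩
    · exact hef rfl
    · exact hdisj f hf w hwe hwf
    · exact hdisj e he w hwf hwe
    · exact hM.2 e he f hf hef w ⟨hwe, hwf⟩

lemma notMem_of_degree_eq_one [G.LocallyFinite] (hM : IsMatching G M) {p a b : V}
    (hp : G.degree p = 1) (hpa : G.Adj p a) (hab : s(a, b) ∈ M) (hpb : p ≠ b) :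
    ∀ e ∈ M, p ∉ e := by
  intro e he hpe
  obtain ⟨z, rfl⟩ := Sym2.mem_iff_exists.1 hpe
  obtain rfl : a = z :=
    (degree_eq_one_iff_existsUnique_adj.1 hp).unique hpa (hM.adj_of_mem he)
  have hpa_ab : s(p, a) = s(a, b) :=
    hM.eq_of_mem_of_mem he hab (Sym2.mem_mk_right p a) (Sym2.mem_mk_left a b)
  rcases Sym2.mem_iff.1 (hpa_ab ▸ Sym2.mem_mk_left p a) with h | h
  exacts [hpa.ne h, hpb h]

end IsMatching

namespace IsMaxMatching

lemma not_augmenting_path_three [DecidableEq V] (hM : IsMaxMatching G M) {p a b q : V}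
    (hab : s(a, b) ∈ M) (hpa : G.Adj p a) (hqb : G.Adj q b) (hpq : p ≠ q)
    (hp : ∀ e ∈ M, p ∉ e) (hq : ∀ e ∈ M, q ∉ e) : False := by
  have hpb : p ≠ b := by rintro rfl; exact hp _ hab (Sym2.mem_mk_right a p)
  have hqa : q ≠ a := by rintro rfl; exact hq _ hab (Sym2.mem_mk_left q b)
  have hne : a ≠ b := (hM.1.adj_of_mem hab).ne
  set M' := M.erase s(a, b)
  have hM'_avoid : ∀ w ∈ s(a, b), ∀ e ∈ M', w ∉ e := fun w hw e he hwe =>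
    Finset.ne_of_mem_erase he (hM.1.eq_of_mem_of_mem (Finset.mem_of_mem_erase he) hab hwe hw)
  have hp' : ∀ e ∈ M', p ∉ e := fun e he => hp e (Finset.mem_of_mem_erase he)
  have hq' : ∀ e ∈ M', q ∉ e := fun e he => hq e (Finset.mem_of_mem_erase he)
  have hN : IsMatching G (insert s(p, a) (insert s(q, b) M')) := by
    refine ((hM.1.mono (Finset.erase_subset _ _)).insert hqb hq'
      (hM'_avoid b (Sym2.mem_mk_right a b))).insert hpa ?_ ?_ <;>
      simp only [Finset.forall_mem_insert]
    · exact ⟨by simp [Sym2.mem_iff, hpq, hpb], hp'⟩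
    · exact ⟨by simp [Sym2.mem_iff, hqa.symm, hne], hM'_avoid a (Sym2.mem_mk_left a b)⟩
  have hcard : (insert s(p, a) (insert s(q, b) M')).card = M.card + 1 := by
    rw [Finset.card_insert_of_notMem, Finset.card_insert_of_notMem
      (fun h => hq' _ h (Sym2.mem_mk_left q b)), Finset.card_erase_add_one hab]
    simp only [Finset.mem_insert, not_or]
    exact ⟨by simp [hpq, hpb], fun h => hp' _ h (Sym2.mem_mk_left p a)⟩
  have := hM.2 _ hN
  omega

lemma degree_eq_one_or_degree_eq_one [G.LocallyFinite] (hM : IsMaxMatching G M)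
    (hpend : ∀ v, G.degree v ≠ 1 → ∃ u, G.Adj v u ∧ G.degree u = 1) {a b : V}
    (hab : s(a, b) ∈ M) : G.degree a = 1 ∨ G.degree b = 1 := by
  classical
  by_contra! h
  obtain ⟨p, hap, hp⟩ := hpend a h.1
  obtain ⟨q, hbq, hq⟩ := hpend b h.2
  have hpq : p ≠ q := by
    rintro rfl
    exact (hM.1.adj_of_mem hab).ne
      ((degree_eq_one_iff_existsUnique_adj.1 hp).unique hap.symm hbq.symm)
  exact hM.not_augmenting_path_three hab hap.symm hbq.symm hpq
    (hM.1.notMem_of_degree_eq_one hp hap.symm hab (by rintro rfl; exact h.2 hp))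
    (hM.1.notMem_of_degree_eq_one hq hbq.symm (Sym2.eq_swap ▸ hab) (by rintro rfl; exact h.1 hq))

end IsMaxMatching

lemma SimpleGraph.Walk.IsPath.degree_ne_one_of_cons_cons [G.LocallyFinite] {u v w x : V}
    {h₁ : G.Adj u v} {h₂ : G.Adj v w} {p : G.Walk w x} (hp : (cons h₁ (cons h₂ p)).IsPath) :
    G.degree v ≠ 1 := by
  intro hv
  have huw : u = w := (degree_eq_one_iff_existsUnique_adj.1 hv).unique h₁.symm h₂
  rw [cons_isPath_iff] at hp
  exact hp.2 (by simp [huw])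

end

theorem classT_alternating_path_length_le_three {V : Type*} [Fintype V]
    (T : SimpleGraph V) [DecidableRel T.Adj] (hT : InClassT T) :
    ∀ M : Finset (Sym2 V), IsMaxMatching T M →
      ∀ (u v : V) (p : T.Walk u v), p.IsPath →
        IsAltEdgeList (↑M) p.edges → p.length ≤ 3 := by
  intro M hM u v p hp halt
  rcases p with _ | ⟨h₁, _ | ⟨h₂, _ | ⟨h₃, _ | ⟨h₄, p⟩⟩⟩⟩
  iterate 4 simp
  exfalso
  simp only [Walk.edges_cons, IsAltEdgeList] at halt
  rcases hM.degree_eq_one_or_degree_eq_one hT.2.2 halt.2.2.1 with hc | hd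
  · exact hp.of_cons.degree_ne_one_of_cons_cons hc
  · exact hp.of_cons.of_cons.degree_ne_one_of_cons_cons hd
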